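/- Every 2-connected, finitely separable graph has at most countably many vertices. -/

import Mathlib

/-- A graph `G` is `k`-connected if it has more than `k` vertices and deleting any set of
fewer than `k` vertices leaves a connected graph. -/
def IsKConnected {V : Type*} (G : SimpleGraph V) (k : ℕ) : Prop :=
  (k : Cardinal) < Cardinal.mk V ∧
    ∀ S : Finset V, S.card < k → (G.induce ((↑S : Set V)ᶜ)).Connected

/-- A graph is finitely separable if every pair of distinct vertices can be separated by
deleting a finite set of edges. -/
def FinSeparable {V : Type*} (G : SimpleGraph V) : Prop :=
  ∀ x y : V, x ≠ y → ∃ F : Set (Sym2 V), F.Finite ∧ F ⊆ G.edgeSet ∧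
    ¬ (G.deleteEdges F).Reachable x y

/-- Iterated successor closure. -/
def succClosure {V : Type*} (succ : V → Set V) (r : V) : ℕ → Set V
  | 0 => {r}
  | n + 1 => succClosure succ r n ∪ ⋃ y ∈ succClosure succ r n, succ y

lemma succClosure_countable {V : Type*} {succ : V → Set V} (h : ∀ y, (succ y).Countable)
    (r : V) : ∀ n, (succClosure succ r n).Countable
  | 0 => Set.countable_singleton r
  | n + 1 => (succClosure_countable h r n).union
      ((succClosure_countable h r n).biUnion fun y _ => h y)

lemma succClosure_succ_subset {V : Type*} {succ : V → Set V} {r y : V} {n : ℕ}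
    (hy : y ∈ succClosure succ r n) : succ y ⊆ ⋃ m, succClosure succ r m := fun z hz =>
  Set.mem_iUnion.2 ⟨n + 1, Or.inr (Set.mem_biUnion hy hz)⟩

lemma sym2_mem_finite {V : Type*} (e : Sym2 V) : {x : V | x ∈ e}.Finite := by
  induction e using Sym2.ind with
  | _ a b =>
    refine ((Set.finite_singleton b).insert a).subset ?_
    intro x hx
    rcases Sym2.mem_iff.1 hx with h | h <;> simp [h]

/-- Every 2-connected, finitely separable graph is countable. -/
theorem countable_of_twoConnected_finSeparable {V : Type*} (G : SimpleGraph V)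
    (h2 : IsKConnected G 2) (hsep : FinSeparable G) :
    Countable V := by
  by_contra hV
  -- walks in G avoiding a small finset
  have hwalk : ∀ (S : Finset V), S.card < 2 → ∀ (a b : V), a ∉ S → b ∉ S →
      ∃ p : G.Walk a b, ∀ x ∈ p.support, x ∉ S := by
    intro S hS a b ha hb
    obtain ⟨q⟩ := (h2.2 S hS).preconnected ⟨a, by simpa using ha⟩ ⟨b, by simpa using hb⟩
    refine ⟨q.map (SimpleGraph.Embedding.induce _).toHom, ?_⟩
    intro x hx
    replace hx : x ∈ (q.map (SimpleGraph.Embedding.induce ((↑S : Set V)ᶜ)).toHom).support := hx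
    rw [SimpleGraph.Walk.support_map, List.mem_map] at hx
    obtain ⟨⟨z, hz⟩, _, rfl⟩ := hx
    simpa using hz
  -- Step 1: some vertex has uncountable neighborhood
  have hdeg : ∃ v : V, ¬(G.neighborSet v).Countable := by
    by_contra hall
    push_neg at hall
    apply hV
    rcases isEmpty_or_nonempty V with h | h
    · exact inferInstance
    obtain ⟨r⟩ := h
    set C : Set V := ⋃ m, succClosure (fun y => G.neighborSet y) r m with hC
    have step : ∀ {a b : V} (p : G.Walk a b), a ∈ C → b ∈ C := by
      intro a b p
      induction p with
      | nil => exact id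
      | @cons a c b h q ih =>
        intro ha
        obtain ⟨m, hm⟩ := Set.mem_iUnion.1 ha
        exact ih (succClosure_succ_subset hm h)
    rw [← Set.countable_univ_iff]
    have hsub : (Set.univ : Set V) ⊆ C := by
      intro w _
      obtain ⟨p, -⟩ := hwalk ∅ (by simp) r w (by simp) (by simp)
      exact step p (Set.mem_iUnion.2 ⟨0, rfl⟩)
    exact (Set.countable_iUnion (succClosure_countable (fun y => hall y) r)).mono hsub
  obtain ⟨v, hv⟩ := hdeg
  -- Step 2: choose finite separating edge sets from v
  have hFex : ∀ y : V, ∃ F : Set (Sym2 V), F.Finite ∧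
      (y ≠ v → ¬(G.deleteEdges F).Reachable y v) := by
    intro y
    by_cases h : y = v
    · exact ⟨∅, Set.finite_empty, fun h' => absurd h h'⟩
    · obtain ⟨F, h1, _, h3⟩ := hsep y v h
      exact ⟨F, h1, fun _ => h3⟩
  choose F hFfin hFsep using hFex
  set succ2 : V → Set V := fun y =>
    {n | G.Adj v n ∧ y ≠ v ∧ (G.deleteEdges (F y)).Reachable y n} ∪
      {x | ∃ e ∈ F y, x ∈ e} with hsucc2
  -- each succ2 y is countable
  have hsucc2c : ∀ y, (succ2 y).Countable := by
    intro y
    apply Set.Countable.union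
    · by_cases hyv : y = v
      · have : {n | G.Adj v n ∧ y ≠ v ∧ (G.deleteEdges (F y)).Reachable y n} = ∅ := by
          ext n; simp [hyv]
        rw [this]; exact Set.countable_empty
      · set D := {n | G.Adj v n ∧ y ≠ v ∧ (G.deleteEdges (F y)).Reachable y n} with hD
        have hmemF : ∀ n ∈ D, s(n, v) ∈ F y := by
          intro n hn
          by_contra hne
          refine hFsep y hyv (hn.2.2.trans ?_)
          exact (SimpleGraph.deleteEdges_adj.2 ⟨hn.1.symm, hne⟩).reachable
        have himg : ((fun n => s(n, v)) '' D).Finite :=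
          (hFfin y).subset (by rintro e ⟨n, hn, rfl⟩; exact hmemF n hn)
        refine (himg.of_finite_image ?_).countable
        intro n hn n' hn' he
        rcases Sym2.eq_iff.1 he with ⟨h1, -⟩ | ⟨h1, h2⟩
        · exact h1
        · exact (G.ne_of_adj hn.1 h1.symm).elim
    · have : {x | ∃ e ∈ F y, x ∈ e} = ⋃ e ∈ F y, {x | x ∈ e} := by
        ext x; simp
      rw [this]
      exact (hFfin y).countable.biUnion fun e _ => (sym2_mem_finite e).countable
  -- pick a starting neighbor
  have hNne : (G.neighborSet v).Nonempty := by
    rcases Set.eq_empty_or_nonempty (G.neighborSet v) with h | h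
    · exact absurd (h ▸ Set.countable_empty) hv
    · exact h
  obtain ⟨n₀, hn₀⟩ := hNne
  have hn₀v : n₀ ≠ v := (G.ne_of_adj hn₀).symm
  set C2 : Set V := ⋃ m, succClosure succ2 n₀ m with hC2
  -- key induction: walks avoiding v lead into the closure
  have key : ∀ {a b : V} (p : G.Walk a b), G.Adj v b → (∀ x ∈ p.support, x ≠ v) →
      ∀ y₀, y₀ ∈ C2 → y₀ ≠ v → (G.deleteEdges (F y₀)).Reachable y₀ a → b ∈ C2 := by
    intro a b p
    induction p with
    | nil =>
      intro hb _ y₀ hy₀ hy₀v hreach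
      obtain ⟨m, hm⟩ := Set.mem_iUnion.1 hy₀
      exact succClosure_succ_subset hm (Or.inl ⟨hb, hy₀v, hreach⟩)
    | @cons a c b h q ih =>
      intro hb hsup y₀ hy₀ hy₀v hreach
      have hsupq : ∀ x ∈ q.support, x ≠ v := by
        intro x hx
        exact hsup x (by rw [SimpleGraph.Walk.support_cons]; exact List.mem_cons_of_mem _ hx)
      by_cases he : s(a, c) ∈ F y₀
      · have hc : c ∈ C2 := by
          obtain ⟨m, hm⟩ := Set.mem_iUnion.1 hy₀
          exact succClosure_succ_subset hm (Or.inr ⟨s(a, c), he, Sym2.mem_mk_right a c⟩)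
        exact ih hb hsupq c hc (hsupq c q.start_mem_support) (SimpleGraph.Reachable.refl c)
      · have hadj : (G.deleteEdges (F y₀)).Adj a c := SimpleGraph.deleteEdges_adj.2 ⟨h, he⟩
        exact ih hb hsupq y₀ hy₀ hy₀v (hreach.trans hadj.reachable)
  -- all neighbors of v lie in the countable closure
  have hNsub : G.neighborSet v ⊆ C2 := by
    intro n hn
    have hnv : n ≠ v := (G.ne_of_adj hn).symm
    obtain ⟨p, hp⟩ := hwalk {v} (by simp) n₀ n (by simpa using hn₀v) (by simpa using hnv)
    refine key p hn (fun x hx => by simpa using hp x hx) n₀ ?_ hn₀v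
      (SimpleGraph.Reachable.refl n₀)
    exact Set.mem_iUnion.2 ⟨0, rfl⟩
  exact hv ((Set.countable_iUnion (succClosure_countable hsucc2c n₀)).mono hNsub)
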